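/- arXiv:2002.01968 — 10 statements merged into one kernel-verified Lean document; each statement's English description precedes it below -/
import Mathlib

section
/- If a word w contains two distinct occurrences of the same factor x that overlap each other (i.e., x = w[i..i+n-1] = w[j..j+n-1] with i < j and 0 < j - i < n, where n = |x|), then w contains an overlap as a factor. -/
/-- `x` occurs in `w` at position `i`: `w[i..i+|x|-1] = x`. -/
def Occurs {α : Type*} (x w : List α) (i : ℕ) : Prop := x <+: w.drop i

/-- `w` contains two disjoint occurrences of `x`. -/
def TwoDisjointOccs {α : Type*} (x w : List α) : Prop :=
  ∃ i j : ℕ, Occurs x w i ∧ Occurs x w j ∧ i + x.length ≤ j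

/-- `w` has period `q ≥ 1`: `w[i] = w[i+q]` whenever both are defined. -/
def HasPeriod {α : Type*} (w : List α) (q : ℕ) : Prop :=
  1 ≤ q ∧ ∀ (i : ℕ) (h : i + q < w.length), w.get ⟨i, by omega⟩ = w.get ⟨i + q, h⟩

/-- The smallest period of `w`. -/
noncomputable def minPeriod {α : Type*} (w : List α) : ℕ := sInf {q | HasPeriod w q}

/-- A word is primitive if it is nonempty and not a proper power. -/
def Primitive {α : Type*} (w : List α) : Prop :=
  w ≠ [] ∧ ∀ (x : List α) (m : ℕ), 2 ≤ m → w ≠ (List.replicate m x).flatten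

/-- `x` is a border of `w`. -/
def IsBorder {α : Type*} (x w : List α) : Prop :=
  x ≠ [] ∧ x ≠ w ∧ x <+: w ∧ x <:+ w

def Unbordered {α : Type*} (w : List α) : Prop := ∀ x, ¬ IsBorder x w

/-- An overlap: a word of the form `a x a x a`. -/
def IsOverlap {α : Type*} (u : List α) : Prop :=
  ∃ (a : α) (x : List α), u = [a] ++ x ++ [a] ++ x ++ [a]

/-- A `t`-overlap: a word of the form `x x x'` where `x` is nonempty of length ≥ t
and `x'` is the prefix of `x` of length `t`. -/
def IsTOverlap {α : Type*} (t : ℕ) (u : List α) : Prop :=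
  ∃ x : List α, x ≠ [] ∧ t ≤ x.length ∧ u = x ++ x ++ x.take t

/-- `w` contains a split occurrence of a `t`-overlap: a factor `x y z` with `x z` a `t`-overlap. -/
def HasSplitTOverlap {α : Type*} (t : ℕ) (w : List α) : Prop :=
  ∃ x y z : List α, (x ++ y ++ z) <:+: w ∧ IsTOverlap t (x ++ z)

/-- `w` contains a reversed split occurrence of a `t`-overlap:
a factor `x y z` with `z x` a `t`-overlap. -/
def HasRevSplitTOverlap {α : Type*} (t : ℕ) (w : List α) : Prop :=
  ∃ x y z : List α, (x ++ y ++ z) <:+: w ∧ IsTOverlap t (z ++ x)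

namespace List

variable {α : Type*}

theorem isOverlap_cons_append_cons_append (a : α) (y : List α) :
    IsOverlap (a :: y ++ a :: y ++ [a]) :=
  ⟨a, y, by simp⟩

/-- A word `x` with `x <+: s ++ x` has period `|s|`; if `0 < |s| < |x|`, the letter after the
second copy of `s` is again the first letter of `s`, so `s ++ s ++ [s.head]` is an overlap. -/
theorem exists_isOverlap_prefix_of_prefix_append_self {s x : List α} (hs : s ≠ [])
    (hlt : s.length < x.length) (hx : x <+: s ++ x) : ∃ u, IsOverlap u ∧ u <+: s ++ x := by
  obtain ⟨r, rfl⟩ : s <+: x :=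
    prefix_of_prefix_length_le (prefix_append s x) hx (by simpa using hlt.le)
  obtain ⟨a, y, rfl⟩ := exists_cons_of_ne_nil hs
  obtain ⟨b, r, rfl⟩ := exists_cons_of_ne_nil (by rintro rfl; simp at hlt : r ≠ [])
  have hr : b :: r <+: a :: (y ++ b :: r) := (prefix_append_right_inj _).mp hx
  obtain rfl : a = b := (cons_prefix_cons.mp hr).1.symm
  refine ⟨a :: y ++ a :: y ++ [a], isOverlap_cons_append_cons_append a y, ?_⟩
  simp

end List

theorem Occurs.take_append {α : Type*} {x w : List α} {i p : ℕ} (hi : Occurs x w i)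
    (hj : Occurs x w (i + p)) (hp : p ≤ x.length) : Occurs (x.take p ++ x) w i := by
  obtain ⟨t, ht⟩ := hi
  have hdrop : w.drop (i + p) = x.drop p ++ t := by
    rw [← List.drop_drop, ← ht, List.drop_append_of_le_length hp]
  have hx : x <+: x.drop p ++ t := hdrop ▸ hj
  rw [Occurs, ← ht]
  calc x.take p ++ x <+: x.take p ++ (x.drop p ++ t) := (List.prefix_append_right_inj _).mpr hx
    _ = x ++ t := by rw [← List.append_assoc, List.take_append_drop]

theorem overlapping_occurrences_give_overlap {α : Type*} (w x : List α) (i j : ℕ)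
    (hi : Occurs x w i) (hj : Occurs x w j) (hij : i < j) (hover : j - i < x.length) :
    ∃ u : List α, IsOverlap u ∧ u <:+: w := by
  obtain ⟨p, rfl⟩ := Nat.exists_eq_add_of_le hij.le
  rw [Nat.add_sub_cancel_left] at hover
  have hocc := hi.take_append hj hover.le
  have hself : x <+: x.take p ++ x :=
    List.prefix_of_prefix_length_le hi hocc (by simp)
  obtain ⟨u, hu, hpre⟩ := List.exists_isOverlap_prefix_of_prefix_append_self
    (List.ne_nil_of_length_pos (by rw [List.length_take]; omega))
    (by rw [List.length_take]; omega) hself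
  exact ⟨u, hu, (hpre.trans hocc).isInfix.trans (List.drop_suffix i w).isInfix⟩
end

section
/- For all integers k ≥ 1 and t ≥ 0, there exists an integer N such that every word over a k-letter alphabet of length at least N contains a split occurrence of a t-overlap. Equivalently, every word over a k-letter alphabet avoiding split occurrences of t-overlaps is finite (has length less than N). -/
/-!
Induct on the number of distinct factors of length `t`. Let `p` be the prefix of length `t` of a
long word `w`. If some window of `w` of length `G` avoids `p`, that window has fewer factors of
length `t` and the induction hypothesis applies to it. Otherwise `p` recurs with gaps at most `G`,
so `w` factors as `x₁ x₂ ⋯ x_r u` where every block `xᵢ` starts with `p`, is followed by `p`, and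
has length between `t + 1` and `t + 1 + G`. There are only finitely many such blocks, so for large
`r` two of them coincide, `xᵢ = xⱼ = x` with `i < j`, and `x ⋯ x p` is a split `t`-overlap since
`p` is the prefix of length `t` of `x`.
-/

variable {α : Type*}

theorem HasSplitTOverlap.mono {t : ℕ} {v w : List α} (h : HasSplitTOverlap t v)
    (hvw : v <:+: w) : HasSplitTOverlap t w := by
  obtain ⟨x, y, z, hxyz, hxz⟩ := h
  exact ⟨x, y, z, hxyz.trans hvw, hxz⟩

theorem hasSplitTOverlap_of_infix {t : ℕ} {x y w : List α} (hx : x ≠ []) (ht : t ≤ x.length)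
    (h : x ++ y ++ (x ++ x.take t) <:+: w) : HasSplitTOverlap t w :=
  ⟨x, y, x ++ x.take t, h, x, hx, ht, by simp⟩

theorem exists_eq_append_cons_append_cons_of_ncard_lt {β : Type*} {l : List β} {s : Set β}
    (hs : s.Finite) (hl : ∀ x ∈ l, x ∈ s) (hcard : s.ncard < l.length) :
    ∃ x A B C, l = A ++ x :: B ++ x :: C := by
  classical
  have hdup : ¬ l.Nodup := fun hnd => by
    have hsub : (l.toFinset : Set β) ⊆ s := fun x hx => hl x (by simpa using hx)
    have := Set.ncard_le_ncard hsub hs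
    rw [Set.ncard_coe_finset, List.toFinset_card_of_nodup hnd] at this
    omega
  obtain ⟨x, hx⟩ := List.exists_duplicate_iff_not_nodup.mpr hdup
  obtain ⟨r₁, r₂, rfl, h₁, h₂⟩ := List.cons_sublist_iff.mp (List.duplicate_iff_sublist.mp hx)
  obtain ⟨A, B, rfl⟩ := List.append_of_mem h₁
  obtain ⟨C, D, rfl⟩ := List.append_of_mem (List.singleton_sublist.mp h₂)
  exact ⟨x, A, B ++ C, D, by simp⟩

theorem exists_factorization_of_forall_window {p : List α} {m G : ℕ} (hm : p.length ≤ m)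
    (r : ℕ) : ∀ w : List α, p <+: w → (∀ v, v <:+: w → v.length = G → p <:+: v) →
      r * (m + G) ≤ w.length →
      ∃ (xs : List (List α)) (u : List α), w = xs.flatten ++ u ∧ p <+: u ∧ xs.length = r ∧
        ∀ x ∈ xs, p <+: x ∧ m ≤ x.length ∧ x.length ≤ m + G := by
  induction r with
  | zero => exact fun w hp _ _ => ⟨[], w, rfl, hp, rfl, by simp⟩
  | succ r ih =>
    intro w hp hwin hlen
    rw [Nat.succ_mul] at hlen
    obtain ⟨v₁, v₂, hv⟩ : p <:+: (w.drop m).take G :=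
      hwin _ ((List.take_prefix G _).isInfix.trans (List.drop_suffix m w).isInfix)
        (by simp; omega)
    set x := w.take m ++ v₁
    set w' := p ++ v₂ ++ w.drop (m + G)
    have hw : w = x ++ w' := by
      rw [← List.take_append_drop m w, ← List.take_append_drop G (w.drop m), ← hv,
        List.drop_drop]
      simp [x, w']
    have hvlen : v₁.length + p.length + v₂.length = G := by
      have := congrArg List.length hv
      simp at this
      omega
    obtain ⟨xs, u, hw', hu, hxs, hblocks⟩ := ih w' ⟨v₂ ++ w.drop (m + G), by simp [w']⟩
      (fun v hv => hwin v (hv.trans (hw ▸ List.suffix_append x w').isInfix))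
      (by have := congrArg List.length hw; simp [x] at this; omega)
    refine ⟨x :: xs, u, by rw [hw, hw']; simp, hu, by simp [hxs], ?_⟩
    refine List.forall_mem_cons.mpr ⟨⟨?_, ?_⟩, hblocks⟩
    · exact (List.prefix_take_iff.mpr ⟨hp, hm⟩).trans (List.prefix_append _ _)
    · simp only [x, List.length_append, List.length_take]
      omega

theorem exists_hasSplitTOverlap_of_forall_window [Finite α] (t G : ℕ) :
    ∃ N, ∀ p w : List α, p.length = t → p <+: w →
      (∀ v, v <:+: w → v.length = G → p <:+: v) → N ≤ w.length → HasSplitTOverlap t w := by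
  set L := t + 1 + G
  have hF := List.finite_length_le α L
  refine ⟨({l : List α | l.length ≤ L}.ncard + 1) * L, fun p w hpt hp hwin hlen => ?_⟩
  obtain ⟨xs, u, rfl, hu, hxs, hblocks⟩ :=
    exists_factorization_of_forall_window (m := t + 1) (by omega) _ w hp hwin hlen
  obtain ⟨x, A, B, C, rfl⟩ :=
    exists_eq_append_cons_append_cons_of_ncard_lt hF (fun x hx => (hblocks x hx).2.2) (by omega)
  obtain ⟨hpx, hxt, -⟩ := hblocks x (by simp)
  have htake : x.take t = p := by rw [← hpt]; exact (List.prefix_iff_eq_take.mp hpx).symm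
  obtain ⟨s, hs⟩ : p <+: C.flatten ++ u := by
    cases C with
    | nil => simpa using hu
    | cons c C => exact ((hblocks c (by simp)).1).trans (by simp)
  refine hasSplitTOverlap_of_infix (x := x) (y := B.flatten)
    (List.ne_nil_of_length_pos (by omega)) (by omega) ⟨A.flatten, s, ?_⟩
  simp [htake, ← hs]

theorem exists_hasSplitTOverlap_of_card_factors_le [Finite α] (t j : ℕ) :
    ∃ N, ∀ (S : Finset (List α)) (w : List α), S.card ≤ j →
      (∀ u, u <:+: w → u.length = t → u ∈ S) → N ≤ w.length → HasSplitTOverlap t w := by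
  induction j with
  | zero =>
    refine ⟨t, fun S w hS hfac hlen => absurd (hfac _ (List.take_prefix t w).isInfix ?_) ?_⟩
    · simpa using hlen
    · simp [Finset.card_eq_zero.mp (Nat.le_zero.mp hS)]
  | succ j ih =>
    classical
    obtain ⟨G, hG⟩ := ih
    obtain ⟨N, hN⟩ := exists_hasSplitTOverlap_of_forall_window (α := α) t G
    refine ⟨N + t, fun S w hS hfac hlen => ?_⟩
    set p := w.take t
    have hpt : p.length = t := by simp [p]; omega
    by_cases hwin : ∀ v, v <:+: w → v.length = G → p <:+: v
    · exact hN p w hpt (List.take_prefix t w) hwin (by omega)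
    · push Not at hwin
      obtain ⟨v, hvw, hvG, hpv⟩ := hwin
      refine (hG (S.erase p) v ?_ ?_ hvG.ge).mono hvw
      · have := Finset.card_erase_of_mem (hfac p (List.take_prefix t w).isInfix hpt)
        omega
      · exact fun u huv hut =>
          Finset.mem_erase.mpr ⟨fun h => hpv (h ▸ huv), hfac u (huv.trans hvw) hut⟩

theorem exists_forall_hasSplitTOverlap [Finite α] (t : ℕ) :
    ∃ N, ∀ w : List α, N ≤ w.length → HasSplitTOverlap t w := by
  have hS := List.finite_length_eq α t
  obtain ⟨N, hN⟩ := exists_hasSplitTOverlap_of_card_factors_le (α := α) t hS.toFinset.card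
  exact ⟨N, fun w hw => hN hS.toFinset w le_rfl (fun u _ hu => by simpa using hu) hw⟩

theorem split_t_overlaps_unavoidable_general (k t : ℕ) :
    ∃ N : ℕ, ∀ w : List (Fin k), N ≤ w.length → HasSplitTOverlap t w :=
  exists_forall_hasSplitTOverlap t

theorem split_t_overlaps_unavoidable (k t : ℕ) (hk : 1 ≤ k) :
    ∃ N : ℕ, ∀ w : List (Fin k), N ≤ w.length → HasSplitTOverlap t w :=
  split_t_overlaps_unavoidable_general k t
end

section
/- Let A_k(n,p) denote the number of words of length n over a k-letter alphabet whose smallest period is exactly p, and let ψ_k(p) denote the number of primitive words of length p over the same alphabet. Then A_k(n,p) = ψ_k(p) for all p with 1 ≤ p ≤ n/2 + 1 (equivalently, 2p ≤ n + 2). -/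
/-! A word `w` of length `n` with period `p ≤ n` is determined by its prefix `w.take p`, and every
word of length `p` extends periodically to such a `w`, so `w ↦ w.take p` is a bijection once we
know that `p` is the least period of `w` exactly when `w.take p` is primitive. If `w.take p = u^m`
with `m ≥ 2`, then `|u|` is a smaller period of `w`. Conversely, a period `q < p` of `w` gives,
by the Fine–Wilf periodicity lemma (applicable since `2p ≤ n + 2`), the period `gcd p q` of
`w.take p`, a proper divisor of `p`, which makes `w.take p` a proper power. -/

namespace List

variable {α : Type*}

theorem length_flatten_replicate (m : ℕ) (u : List α) :
    (replicate m u).flatten.length = m * u.length := by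
  simp

theorem hasPeriod_flatten_replicate (m : ℕ) (u : List α) :
    (replicate m u).flatten.HasPeriod u.length := by
  cases m with
  | zero => simp
  | succ m =>
    have hcomm : u ++ (replicate m u).flatten = (replicate m u).flatten ++ u := by
      rw [← flatten_cons, ← replicate_succ, replicate_succ', flatten_append]
      simp
    rw [HasPeriod, replicate_succ, flatten_cons, take_left, prefix_append_right_inj, hcomm]
    exact prefix_append _ _

theorem HasPeriod.eq_of_take_eq {v w : List α} {p : ℕ} (hp : 0 < p) (hv : v.HasPeriod p)
    (hw : w.HasPeriod p) (hlen : v.length = w.length) (htake : v.take p = w.take p) : v = w := by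
  apply ext_getElem?
  intro i
  by_cases hi : i < v.length
  · have hmod : i % p < p := Nat.mod_lt i hp
    calc v[i]? = v[i % p]? := hasPeriod_iff_forall_getElem?_mod.mp hv i hi
      _ = (v.take p)[i % p]? := (getElem?_take_of_lt hmod).symm
      _ = (w.take p)[i % p]? := by rw [htake]
      _ = w[i % p]? := getElem?_take_of_lt hmod
      _ = w[i]? := (hasPeriod_iff_forall_getElem?_mod.mp hw i (hlen ▸ hi)).symm
  · rw [getElem?_eq_none (by omega), getElem?_eq_none (by omega)]

theorem HasPeriod.of_take {w : List α} {p d : ℕ} (hp : 0 < p) (hw : w.HasPeriod p) (hd : d ∣ p)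
    (htake : (w.take p).HasPeriod d) : w.HasPeriod d := by
  rw [hasPeriod_iff_forall_getElem?_mod] at hw htake ⊢
  intro i hi
  have hmod : i % p < p := Nat.mod_lt i hp
  calc w[i]? = w[i % p]? := hw i hi
    _ = (w.take p)[i % p]? := (getElem?_take_of_lt hmod).symm
    _ = (w.take p)[i % p % d]? := htake _ (by have := Nat.mod_le i p; simp; omega)
    _ = w[i % p % d]? := getElem?_take_of_lt (lt_of_le_of_lt (Nat.mod_le _ _) hmod)
    _ = w[i % d]? := by rw [Nat.mod_mod_of_dvd i hd]

theorem HasPeriod.eq_flatten_replicate_take {w : List α} {d : ℕ} (hd : 0 < d)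
    (hw : w.HasPeriod d) (hdvd : d ∣ w.length) :
    w = (replicate (w.length / d) (w.take d)).flatten := by
  rcases eq_or_ne w [] with rfl | hne
  · simp
  have hdw : d ≤ w.length := Nat.le_of_dvd (length_pos_iff.mpr hne) hdvd
  have htake_len : (w.take d).length = d := length_take_of_le hdw
  obtain ⟨m, hm⟩ : ∃ m, w.length / d = m + 1 := Nat.exists_eq_add_one.mpr (Nat.div_pos hdw hd)
  refine hw.eq_of_take_eq hd ?_ ?_ ?_
  · simpa [htake_len] using hasPeriod_flatten_replicate (w.length / d) (w.take d)
  · rw [length_flatten_replicate, htake_len, Nat.div_mul_cancel hdvd]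
  · rw [hm, replicate_succ, flatten_cons, take_left' htake_len]

theorem exists_hasPeriod_take_eq {u : List α} (hu : u ≠ []) {n : ℕ} (hn : u.length ≤ n) :
    ∃ w : List α, w.length = n ∧ w.HasPeriod u.length ∧ w.take u.length = u := by
  have hlen : n ≤ (replicate n u).flatten.length := by
    rw [length_flatten_replicate]
    exact Nat.le_mul_of_pos_right n (length_pos_iff.mpr hu)
  refine ⟨((replicate n u).flatten).take n, length_take_of_le hlen,
    (hasPeriod_flatten_replicate n u).infix (take_prefix _ _).isInfix, ?_⟩
  obtain ⟨m, rfl⟩ : ∃ m, n = m + 1 :=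
    Nat.exists_eq_add_one.mpr ((length_pos_iff.mpr hu).trans_le hn)
  rw [take_take, min_eq_left hn, replicate_succ, flatten_cons, take_left]

end List

section Words

variable {α : Type*}

theorem hasPeriod_iff_list_hasPeriod {w : List α} {q : ℕ} :
    HasPeriod w q ↔ 1 ≤ q ∧ w.HasPeriod q := by
  rw [HasPeriod, List.hasPeriod_iff_getElem?]
  refine and_congr_right fun _ => ⟨fun h i hi => ?_, fun h i hi => ?_⟩
  · have hi' : i + q < w.length := by omega
    simpa [List.getElem?_eq_getElem hi', List.getElem?_eq_getElem (by omega : i < w.length)]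
      using h i hi'
  · simpa [List.getElem?_eq_getElem hi, List.getElem?_eq_getElem (by omega : i < w.length)]
      using h i (by omega)

theorem minPeriod_eq_iff {w : List α} {p : ℕ} (hp : 0 < p) :
    minPeriod w = p ↔ IsLeast {q | HasPeriod w q} p := by
  refine ⟨fun h => ?_, IsLeast.csInf_eq⟩
  have hne : {q | HasPeriod w q}.Nonempty := by
    by_contra hempty
    rw [Set.not_nonempty_iff_eq_empty] at hempty
    rw [minPeriod, hempty, Nat.sInf_empty] at h
    omega
  exact h ▸ ⟨Nat.sInf_mem hne, fun q hq => Nat.sInf_le hq⟩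

theorem primitive_iff_forall_not_hasPeriod {x : List α} :
    Primitive x ↔
      x ≠ [] ∧ ∀ d, 0 < d → d < x.length → d ∣ x.length → ¬ x.HasPeriod d := by
  refine and_congr_right fun hx =>
    ⟨fun h d hd hlt hdvd hper => ?_, fun h u m hm heq => ?_⟩
  · obtain ⟨s, hs⟩ := hdvd
    have hs2 : 2 ≤ s := by
      by_contra! hs2
      interval_cases s <;> omega
    have hrep := hper.eq_flatten_replicate_take hd ⟨s, hs⟩
    rw [hs, Nat.mul_div_cancel_left s hd] at hrep
    exact h _ s hs2 hrep
  · have hlen : x.length = m * u.length := by rw [heq, List.length_flatten_replicate]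
    have hu : 0 < u.length := List.length_pos_iff.mpr (by rintro rfl; exact hx (by simpa using heq))
    refine h u.length hu (by nlinarith) ⟨m, by rw [hlen, mul_comm]⟩ ?_
    exact heq ▸ List.hasPeriod_flatten_replicate m u

theorem minPeriod_eq_iff_primitive_take {w : List α} {p : ℕ} (hp : 0 < p) (hpw : p ≤ w.length)
    (hpn : 2 * p ≤ w.length + 2) (hw : w.HasPeriod p) :
    minPeriod w = p ↔ Primitive (w.take p) := by
  have htake_len : (w.take p).length = p := List.length_take_of_le hpw
  rw [minPeriod_eq_iff hp, primitive_iff_forall_not_hasPeriod, htake_len]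
  refine ⟨fun h => ⟨List.ne_nil_of_length_pos (by omega), fun d hd hdp hdvd hper => ?_⟩,
    fun ⟨_, h⟩ => ⟨hasPeriod_iff_list_hasPeriod.mpr ⟨hp, hw⟩, fun q hq => ?_⟩⟩
  · have := h.2 (hasPeriod_iff_list_hasPeriod.mpr ⟨hd, hw.of_take hp hdvd hper⟩)
    omega
  · obtain ⟨hq, hwq⟩ := hasPeriod_iff_list_hasPeriod.mp hq
    by_contra! hqp
    have hg : 0 < p.gcd q := Nat.gcd_pos_of_pos_left q hp
    -- Fine–Wilf applies because `p + q - gcd p q ≤ 2 * p - 2 ≤ w.length`.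
    have hwg : w.HasPeriod (p.gcd q) := hw.gcd hwq (by omega)
    have hgp : p.gcd q < p := (Nat.gcd_le_right (m := p) (n := q) hq).trans_lt hqp
    exact h _ hg hgp (Nat.gcd_dvd_left p q) (hwg.infix (List.take_prefix p w).isInfix)

end Words

theorem count_words_with_min_period (k n p : ℕ) (hn : 1 ≤ n) (hp : 1 ≤ p)
    (hpn : 2 * p ≤ n + 2) :
    {w : List (Fin k) | w.length = n ∧ minPeriod w = p}.ncard
      = {w : List (Fin k) | w.length = p ∧ Primitive w}.ncard := by
  have hpn' : p ≤ n := by omega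
  set S := {w : List (Fin k) | w.length = n ∧ minPeriod w = p}
  have hS : ∀ w ∈ S, w.HasPeriod p := fun w hw =>
    (hasPeriod_iff_list_hasPeriod.mp ((minPeriod_eq_iff hp).mp hw.2).1).2
  have hinj : Set.InjOn (List.take p) S := fun v hv w hw h =>
    (hS v hv).eq_of_take_eq hp (hS w hw) (hv.1.trans hw.1.symm) h
  have himage : List.take p '' S = {x | x.length = p ∧ Primitive x} := by
    ext x
    constructor
    · rintro ⟨w, hw, rfl⟩
      have hlen : p ≤ w.length := hw.1 ▸ hpn'
      exact ⟨List.length_take_of_le hlen,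
        (minPeriod_eq_iff_primitive_take hp hlen (hw.1 ▸ hpn) (hS w hw)).mp hw.2⟩
    · rintro ⟨rfl, hx⟩
      obtain ⟨w, hwlen, hwper, hwtake⟩ := List.exists_hasPeriod_take_eq hx.1 hpn'
      have hlen : x.length ≤ w.length := hwlen ▸ hpn'
      exact ⟨w, ⟨hwlen, (minPeriod_eq_iff_primitive_take hp hlen (hwlen ▸ hpn) hwper).mpr
        (by rwa [hwtake])⟩, hwtake⟩
  rw [← himage, hinj.ncard_image]
end

section
/- For all integers k ≥ 2 and n ≥ 1, the number u_k(n) of unbordered words of length n over a k-letter alphabet satisfies u_k(n) ≥ k^n (1 - 1/k - 1/k^2). -/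
/-!
A bordered word `w` has a shortest border `x`, and `x` is unbordered: hence `2|x| ≤ |w|`, and
if `|x| ≥ 2` then `x` begins and ends with different letters. Words whose first and last letters
agree number `k^(n-1)`. A word whose shortest border has length `j ∈ [2, n/2]` is determined by
its last `n - j` letters, in which the first and last letters of the border differ; there are
`k^(n-j) - k^(n-j-1)` such suffixes, and these counts telescope to `k^(n-2)`. So at most
`k^(n-1) + k^(n-2)` words of length `n` are bordered.
-/

open List

section Words

variable {α : Type*} {x y w : List α}

theorem IsBorder.length_lt (h : IsBorder x w) : x.length < w.length :=
  h.2.2.1.length_le.lt_of_ne fun hl ↦ h.2.1 (h.2.2.1.eq_of_length hl)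

theorem IsBorder.length_pos (h : IsBorder x w) : 0 < x.length :=
  length_pos_iff.mpr h.1

theorem IsBorder.trans (hxy : IsBorder x y) (hyw : IsBorder y w) : IsBorder x w :=
  ⟨hxy.1, fun h ↦ (h ▸ hxy.length_lt).not_ge hyw.2.2.1.length_le,
    hxy.2.2.1.trans hyw.2.2.1, hxy.2.2.2.trans hyw.2.2.2⟩

theorem unbordered_of_length_le_one (hw : w.length ≤ 1) : Unbordered w :=
  fun x hx ↦ by have := hx.length_pos; have := hx.length_lt; omega

/-- A border of a border is a shorter border, so a shortest border is unbordered. -/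
theorem exists_unbordered_border (h : IsBorder x w) : ∃ z, IsBorder z w ∧ Unbordered z := by
  induction hn : x.length using Nat.strong_induction_on generalizing x with
  | _ n ih =>
    by_cases hx : Unbordered x
    · exact ⟨x, h, hx⟩
    · obtain ⟨y, hy⟩ := not_forall_not.mp hx
      exact ih _ (hn ▸ hy.length_lt) (hy.trans h) rfl

/-- Two overlapping occurrences of `x` at distance `q` make `x.take (|x| - q)` a border of `x`. -/
theorem IsBorder.two_mul_length_le (hb : IsBorder x w) (hu : Unbordered x) :
    2 * x.length ≤ w.length := by
  by_contra! hlen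
  have hlt := hb.length_lt
  obtain ⟨-, -, hxp, hxs⟩ := hb
  set q := w.length - x.length
  have hdrop : x.drop q = x.take (x.length - q) := by
    conv_lhs => rw [prefix_iff_eq_take.mp hxp]
    rw [drop_take, ← suffix_iff_eq_drop.mp hxs]
  have hlen' : (x.take (x.length - q)).length = x.length - q := length_take_of_le (by omega)
  refine hu _ ⟨ne_nil_of_length_pos (by omega), fun h ↦ by rw [h] at hlen'; omega,
    take_prefix _ _, hdrop ▸ drop_suffix q x⟩

theorem Unbordered.head?_ne_getLast? (hu : Unbordered x) (hx : 2 ≤ x.length) :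
    x.head? ≠ x.getLast? := by
  obtain _ | ⟨a, t⟩ := x
  · simp at hx
  intro h
  refine hu [a]
    ⟨cons_ne_nil _ _, fun h' ↦ ?_, ⟨t, rfl⟩, ⟨_, dropLast_append_getLast? a h.symm⟩⟩
  simp [← h'] at hx

theorem head?_eq_getLast?_or_exists_take_suffix (h : ¬ Unbordered w) :
    w.head? = w.getLast? ∨
      ∃ j ∈ Finset.Icc 2 (w.length / 2), w.take j <:+ w ∧ w.head? ≠ w.getLast? := by
  obtain ⟨x₀, hx₀⟩ := not_forall_not.mp h
  obtain ⟨x, hx, hu⟩ := exists_unbordered_border hx₀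
  have hhead : x.head? = w.head? := by
    obtain ⟨t, rfl⟩ := hx.2.2.1
    exact (head?_append_of_ne_nil x hx.1).symm
  have hlast : x.getLast? = w.getLast? := by
    obtain ⟨t, rfl⟩ := hx.2.2.2
    exact (getLast?_append_of_ne_nil t hx.1).symm
  rw [← hhead, ← hlast]
  by_cases hx1 : x.length = 1
  · obtain ⟨a, rfl⟩ := length_eq_one_iff.mp hx1
    exact Or.inl rfl
  · have := hx.length_pos
    have := hx.two_mul_length_le hu
    refine Or.inr ⟨x.length, Finset.mem_Icc.mpr ⟨by omega, by omega⟩, ?_,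
      hu.head?_ne_getLast? (by omega)⟩
    exact prefix_iff_eq_take.mp hx.2.2.1 ▸ hx.2.2.2

theorem take_eq_drop_of_take_suffix {j : ℕ} (hj : j ≤ w.length) (h : w.take j <:+ w) :
    w.take j = w.drop (w.length - j) := by
  simpa [hj] using suffix_iff_eq_drop.mp h

variable [Fintype α]

theorem ncard_setOf_length_eq (n : ℕ) :
    {w : List α | w.length = n}.ncard = Fintype.card α ^ n := by
  rw [← Nat.card_coe_set_eq]
  exact (Nat.card_eq_fintype_card (α := List.Vector α n)).trans (card_vector n)

theorem ncard_setOf_getElem?_eq_getLast? {i n : ℕ} (hi : i < n) :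
    {w : List α | w.length = n + 1 ∧ w[i]? = w.getLast?}.ncard = Fintype.card α ^ n := by
  have himage : {w : List α | w.length = n + 1 ∧ w[i]? = w.getLast?} =
      (fun u ↦ u ++ u[i]?.toList) '' {u | u.length = n} := by
    ext w
    constructor
    · rintro ⟨hw, hwi⟩
      have ha := getLast?_eq_some_getLast (ne_nil_of_length_eq_add_one hw)
      refine ⟨w.dropLast, by simp [hw], ?_⟩
      have : w.dropLast[i]? = w[i]? := by rw [getElem?_dropLast, if_pos (by omega)]
      simp only [this, hwi, ha, Option.toList_some]
      exact dropLast_append_getLast? _ ha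
    · rintro ⟨u, hu : u.length = n, rfl⟩
      have : u[i]? = some u[i] := getElem?_eq_getElem (by omega)
      simp [this, hu, getElem?_append_left (hu ▸ hi : i < u.length)]
  rw [himage, Set.InjOn.ncard_image, ncard_setOf_length_eq]
  intro u hu v hv huv
  exact (append_inj huv (hu.trans hv.symm)).1

theorem ncard_setOf_getElem?_ne_getLast? {i n : ℕ} (hi : i < n) :
    {w : List α | w.length = n + 1 ∧ w[i]? ≠ w.getLast?}.ncard =
      Fintype.card α ^ (n + 1) - Fintype.card α ^ n := by
  have hdiff : {w : List α | w.length = n + 1 ∧ w[i]? ≠ w.getLast?} =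
      {w | w.length = n + 1} \ {w | w.length = n + 1 ∧ w[i]? = w.getLast?} := by
    ext w
    simp only [Set.mem_ofPred_eq, Set.mem_sdiff]
    tauto
  rw [hdiff, Set.ncard_sdiff (fun w hw ↦ hw.1)
      ((finite_length_eq α (n + 1)).subset fun w hw ↦ hw.1),
    ncard_setOf_length_eq, ncard_setOf_getElem?_eq_getLast? hi]

/-- `w ↦ w.drop j` is injective on these words, since the border `w.take j` reappears as the last
`j` letters of `w.drop j`, and its first and last letters differ. -/
theorem ncard_setOf_take_suffix_le {n j : ℕ} (hj : 2 ≤ j) (hjn : 2 * j ≤ n) :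
    {w : List α | w.length = n ∧ w.take j <:+ w ∧ w.head? ≠ w.getLast?}.ncard ≤
      Fintype.card α ^ (n - j) - Fintype.card α ^ (n - j - 1) := by
  obtain ⟨L, hL⟩ : ∃ L, n - j = L + 1 := ⟨n - j - 1, by omega⟩
  rw [hL, Nat.add_sub_cancel,
    ← ncard_setOf_getElem?_ne_getLast? (α := α) (i := n - 2 * j) (by omega)]
  have hdrop : ∀ w : List α, w.length = n → w.take j <:+ w →
      (w.drop j).drop (n - 2 * j) = w.take j := by
    intro w hw hs
    rw [drop_drop, take_eq_drop_of_take_suffix (by omega) hs, hw]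
    congr 1
    omega
  refine Set.ncard_le_ncard_of_injOn (fun w ↦ w.drop j) ?_ ?_
    ((finite_length_eq α (L + 1)).subset fun w hw ↦ hw.1)
  · rintro w ⟨hw, hs, hne⟩
    have hfirst : (w.drop j)[n - 2 * j]? = w.head? :=
      calc (w.drop j)[n - 2 * j]? = ((w.drop j).drop (n - 2 * j))[0]? := by
            simp only [getElem?_drop, add_zero]
        _ = w[0]? := by rw [hdrop w hw hs, getElem?_take_of_lt (by omega)]
        _ = w.head? := head?_eq_getElem?.symm
    have hlast : (w.drop j).getLast? = w.getLast? := by rw [getLast?_drop, if_neg (by omega)]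
    exact ⟨by simp [hw]; omega, hfirst ▸ hlast ▸ hne⟩
  · rintro w ⟨hw, hs, -⟩ v ⟨hv, hs', -⟩ hwv
    rw [← take_append_drop j w, ← take_append_drop j v, ← hdrop w hw hs, ← hdrop v hv hs']
    simp only at hwv
    rw [hwv]

theorem ncard_unbordered_add_ncard_not_unbordered (n : ℕ) :
    {w : List α | w.length = n ∧ Unbordered w}.ncard +
      {w : List α | w.length = n ∧ ¬ Unbordered w}.ncard = Fintype.card α ^ n := by
  rw [← Set.ncard_union_eq (fun s hU hB w hw ↦ (hB hw).2 (hU hw).2)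
    ((finite_length_eq α n).subset fun w hw ↦ hw.1)
    ((finite_length_eq α n).subset fun w hw ↦ hw.1),
    ← ncard_setOf_length_eq n]
  congr 1
  ext w
  simp only [Set.mem_union, Set.mem_ofPred_eq]
  tauto

theorem sum_Icc_pow_sub_pow_add_pow {k : ℕ} (hk : 1 ≤ k) (n : ℕ) {m : ℕ} (hm : 1 ≤ m) :
    ∑ j ∈ Finset.Icc 2 m, (k ^ (n - j) - k ^ (n - j - 1)) + k ^ (n - m - 1) = k ^ (n - 2) := by
  induction m, hm using Nat.le_induction with
  | base => simp [Nat.sub_sub]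
  | succ m hm ih =>
    rw [Finset.sum_Icc_succ_top (by omega), add_assoc,
      Nat.sub_add_cancel (Nat.pow_le_pow_right hk (by omega)), ← ih, Nat.sub_sub]

theorem ncard_not_unbordered_le [Nonempty α] {n : ℕ} (hn : 2 ≤ n) :
    {w : List α | w.length = n ∧ ¬ Unbordered w}.ncard ≤
      Fintype.card α ^ (n - 1) + Fintype.card α ^ (n - 2) := by
  have hsum := sum_Icc_pow_sub_pow_add_pow (Fintype.card_pos (α := α)) n (m := n / 2) (by omega)
  set k := Fintype.card α
  set C := fun j ↦ {w : List α | w.length = n ∧ w.take j <:+ w ∧ w.head? ≠ w.getLast?}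
  have hcover : {w : List α | w.length = n ∧ ¬ Unbordered w} ⊆
      {w | w.length = n ∧ w[0]? = w.getLast?} ∪ ⋃ j ∈ Finset.Icc 2 (n / 2), C j := by
    rintro w ⟨hw, hu⟩
    rcases head?_eq_getLast?_or_exists_take_suffix hu with h | ⟨j, hj, hs, hne⟩
    · exact Or.inl ⟨hw, head?_eq_getElem? ▸ h⟩
    · exact Or.inr (Set.mem_biUnion (hw ▸ hj) ⟨hw, hs, hne⟩)
  have hfin :
      ({w | w.length = n ∧ w[0]? = w.getLast?} ∪ ⋃ j ∈ Finset.Icc 2 (n / 2), C j).Finite :=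
    (finite_length_eq α n).subset (Set.union_subset (fun w hw ↦ hw.1)
      (Set.iUnion₂_subset fun j _ w hw ↦ hw.1))
  have hfirst : {w : List α | w.length = n ∧ w[0]? = w.getLast?}.ncard ≤ k ^ (n - 1) := by
    obtain ⟨m, rfl⟩ : ∃ m, n = m + 1 := ⟨n - 1, by omega⟩
    exact (ncard_setOf_getElem?_eq_getLast? (by omega)).le
  calc _ ≤ _ := Set.ncard_le_ncard hcover hfin
    _ ≤ _ + ∑ j ∈ Finset.Icc 2 (n / 2), (C j).ncard :=
      (Set.ncard_union_le _ _).trans (Nat.add_le_add_left (Finset.set_ncard_biUnion_le _ _) _)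
    _ ≤ k ^ (n - 1) + ∑ j ∈ Finset.Icc 2 (n / 2), (k ^ (n - j) - k ^ (n - j - 1)) := by
      gcongr with j hj
      obtain ⟨hj2, hjn⟩ := Finset.mem_Icc.mp hj
      exact ncard_setOf_take_suffix_le hj2 (by omega)
    _ ≤ k ^ (n - 1) + k ^ (n - 2) := by omega

theorem ncard_not_unbordered_mul_sq_le [Nonempty α] (n : ℕ) :
    {w : List α | w.length = n ∧ ¬ Unbordered w}.ncard * Fintype.card α ^ 2 ≤
      Fintype.card α ^ n * (Fintype.card α + 1) := by
  obtain hn | hn : n ≤ 1 ∨ 2 ≤ n := by omega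
  · have hempty : {w : List α | w.length = n ∧ ¬ Unbordered w} = ∅ :=
      Set.eq_empty_of_forall_notMem fun w hw ↦ hw.2 (unbordered_of_length_le_one (hw.1 ▸ hn))
    simp [hempty]
  · obtain ⟨m, rfl⟩ : ∃ m, n = m + 2 := ⟨n - 2, by omega⟩
    calc _ ≤ (Fintype.card α ^ (m + 1) + Fintype.card α ^ m) * Fintype.card α ^ 2 :=
          Nat.mul_le_mul_right _ (ncard_not_unbordered_le hn)
      _ = Fintype.card α ^ (m + 2) * (Fintype.card α + 1) := by ring

end Words

theorem unbordered_count_lower_bound_general (k n : ℕ) (hk : 2 ≤ k) :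
    (k : ℝ) ^ n * (1 - 1 / (k : ℝ) - 1 / (k : ℝ) ^ 2)
      ≤ (({w : List (Fin k) | w.length = n ∧ Unbordered w}).ncard : ℝ) := by
  have : NeZero k := ⟨by omega⟩
  set U := {w : List (Fin k) | w.length = n ∧ Unbordered w}
  set B := {w : List (Fin k) | w.length = n ∧ ¬ Unbordered w}
  have hpart : (U.ncard : ℝ) + B.ncard = k ^ n := by
    exact_mod_cast Fintype.card_fin k ▸ ncard_unbordered_add_ncard_not_unbordered n
  have hB : (B.ncard : ℝ) * k ^ 2 ≤ k ^ n * (k + 1) := by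
    exact_mod_cast Fintype.card_fin k ▸ ncard_not_unbordered_mul_sq_le n
  have hk0 : (0 : ℝ) < k := by positivity
  calc (k : ℝ) ^ n * (1 - 1 / k - 1 / k ^ 2) = (k : ℝ) ^ n - k ^ n * (k + 1) / k ^ 2 := by
        field_simp
        ring
    _ ≤ (k : ℝ) ^ n - B.ncard := by gcongr; exact (le_div_iff₀ (by positivity)).mpr hB
    _ = _ := by linarith

theorem unbordered_count_lower_bound (k n : ℕ) (hk : 2 ≤ k) (hn : 1 ≤ n) :
    (k : ℝ) ^ n * (1 - 1 / (k : ℝ) - 1 / (k : ℝ) ^ 2)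
      ≤ (({w : List (Fin k) | w.length = n ∧ Unbordered w}).ncard : ℝ) :=
  unbordered_count_lower_bound_general k n hk
end

section
/- Let x be a word of length n ≥ 1 and let w be a word containing m occurrences of x but no two disjoint occurrences of x. Then m ≤ ⌈n / per(x)⌉. -/
/-! If occurrences of `x` start at `i < j`, then `x[k] = w[j + k] = x[k + (j - i)]`, so `j - i`
is a period of `x`. Without two disjoint occurrences, all occurrences start within distance
`n` of each other; since their gaps are at least `per(x)`, the map
`i ↦ ⌊(i - i₀) / per(x)⌋`, with `i₀` the first occurrence, injects them into `[0, ⌈n / per(x)⌉)`. -/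

section Occurrences

variable {α : Type*} {x w : List α} {i j : ℕ}

theorem Occurs.getElem_eq (h : Occurs x w i) {k : ℕ} (hk : k < x.length) :
    x[k] = w[i + k]'(by have := h.length_le; simp only [List.length_drop] at this; omega) := by
  rw [List.IsPrefix.getElem h hk, List.getElem_drop]

theorem Occurs.hasPeriod_sub (hi : Occurs x w i) (hj : Occurs x w j) (hij : i < j) :
    HasPeriod x (j - i) := by
  refine ⟨by omega, fun k hk => ?_⟩
  simp only [List.get_eq_getElem]
  rw [hj.getElem_eq (by omega), hi.getElem_eq hk]
  congr 1
  omega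

end Occurrences

theorem hasPeriod_of_length_le {α : Type*} {x : List α} {q : ℕ} (hq : 1 ≤ q)
    (hlen : x.length ≤ q) : HasPeriod x q :=
  ⟨hq, fun i h => absurd h (by omega)⟩

theorem minPeriod_le {α : Type*} {x : List α} {q : ℕ} (h : HasPeriod x q) :
    minPeriod x ≤ q :=
  Nat.sInf_le h

theorem minPeriod_pos {α : Type*} (x : List α) : 0 < minPeriod x :=
  (Nat.sInf_mem (s := {q | HasPeriod x q})
    ⟨x.length + 1, hasPeriod_of_length_le le_add_self (Nat.le_succ _)⟩).1

theorem Nat.div_lt_div_of_add_le {a b p : ℕ} (hp : 0 < p) (h : a + p ≤ b) : a / p < b / p :=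
  calc a / p < a / p + 1 := Nat.lt_succ_self _
    _ = (a + p) / p := (Nat.add_div_right a hp).symm
    _ ≤ b / p := Nat.div_le_div_right h

theorem Set.ncard_le_of_gap_le_of_lt_add {S : Set ℕ} {n p : ℕ} (hp : 0 < p)
    (hgap : ∀ i ∈ S, ∀ j ∈ S, i < j → p ≤ j - i) (hspan : ∀ i ∈ S, ∀ j ∈ S, j < i + n) :
    S.ncard ≤ (n + p - 1) / p := by
  rcases S.eq_empty_or_nonempty with rfl | hne
  · simp
  set a := sInf S
  have ha : a ∈ S := Nat.sInf_mem hne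
  have hmono : StrictMonoOn (fun i => (i - a) / p) S := fun i hi j hj hij => by
    have := hgap i hi j hj hij
    have : a ≤ i := Nat.sInf_le hi
    exact Nat.div_lt_div_of_add_le hp (by omega)
  have hmaps : Set.MapsTo (fun i => (i - a) / p) S (Set.Iio ((n + p - 1) / p)) := fun i hi => by
    have := hspan a ha i hi
    have : a ≤ i := Nat.sInf_le hi
    exact Nat.div_lt_div_of_add_le hp (by omega)
  calc S.ncard = ((fun i => (i - a) / p) '' S).ncard := hmono.injOn.ncard_image.symm
    _ ≤ (Set.Iio ((n + p - 1) / p)).ncard :=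
      Set.ncard_le_ncard hmaps.image_subset (Set.finite_Iio _)
    _ = (n + p - 1) / p := Set.ncard_Iio_nat _

theorem occurrences_bound_of_no_disjoint_general {α : Type*} (x w : List α) (n m : ℕ)
    (hn : x.length = n)
    (hm : {i : ℕ | Occurs x w i}.ncard = m)
    (hnd : ¬ TwoDisjointOccs x w) :
    m ≤ (n + minPeriod x - 1) / minPeriod x := by
  subst hn hm
  refine Set.ncard_le_of_gap_le_of_lt_add (minPeriod_pos x)
    (fun i hi j hj hij => minPeriod_le (Occurs.hasPeriod_sub hi hj hij))
    (fun i hi j hj => ?_)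
  by_contra hle
  exact hnd ⟨i, j, hi, hj, by omega⟩

theorem occurrences_bound_of_no_disjoint {α : Type*} (x w : List α) (n m : ℕ)
    (hn : x.length = n) (h1 : 1 ≤ n)
    (hm : {i : ℕ | Occurs x w i}.ncard = m)
    (hnd : ¬ TwoDisjointOccs x w) :
    m ≤ (n + minPeriod x - 1) / minPeriod x :=
  occurrences_bound_of_no_disjoint_general x w n m hn hm hnd
end

section
/- For every word x of length n ≥ 1, there exists a word w that contains at least ⌈n / per(x)⌉ occurrences of x but no two disjoint occurrences of x; that is, the upper bound ⌈n / per(x)⌉ on the number of pairwise non-disjoint occurrences is achievable for each x. -/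
/-! Let `p = per(x)`, `u` the prefix of `x` of length `p` and `j = ⌊(|x| - 1) / p⌋`. Since `x` is
a prefix of `u x`, it occurs in `w = uʲ x` at every position `m * p` with `m ≤ j`: these are
`j + 1 = ⌈|x| / p⌉` occurrences. But `|w| = j * p + |x| < 2 |x|` leaves no room for two disjoint
occurrences. -/

theorem hasPeriod_length {α : Type*} {w : List α} (hw : 1 ≤ w.length) : HasPeriod w w.length :=
  ⟨hw, fun _ h => absurd h (by omega)⟩

theorem hasPeriod_minPeriod {α : Type*} {w : List α} (hw : 1 ≤ w.length) :
    HasPeriod w (minPeriod w) :=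
  Nat.sInf_mem (s := {q | HasPeriod w q}) ⟨_, hasPeriod_length hw⟩

theorem minPeriod_le_length {α : Type*} {w : List α} (hw : 1 ≤ w.length) :
    minPeriod w ≤ w.length :=
  Nat.sInf_le (hasPeriod_length hw)

theorem HasPeriod.drop_eq_take {α : Type*} {w : List α} {q : ℕ} (h : HasPeriod w q) :
    w.drop q = w.take (w.length - q) := by
  refine List.ext_getElem (by simp) fun i hi _ => ?_
  rw [List.length_drop] at hi
  simpa [Nat.add_comm q i] using (h.2 i (by omega)).symm

theorem HasPeriod.prefix_take_append {α : Type*} {w : List α} {q : ℕ} (h : HasPeriod w q) :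
    w <+: w.take q ++ w :=
  ⟨w.drop (w.length - q), by
    calc w ++ w.drop (w.length - q)
        = w.take q ++ (w.take (w.length - q) ++ w.drop (w.length - q)) := by
          rw [← h.drop_eq_take, ← List.append_assoc, List.take_append_drop]
      _ = w.take q ++ w := by rw [List.take_append_drop]⟩

theorem HasPeriod.prefix_flatten_replicate_take_append {α : Type*} {w : List α} {q : ℕ}
    (h : HasPeriod w q) (m : ℕ) : w <+: (List.replicate m (w.take q)).flatten ++ w := by
  induction m with
  | zero => simp
  | succ m ih =>
    rw [List.replicate_succ, List.flatten_cons, List.append_assoc]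
    exact h.prefix_take_append.trans (List.prefix_append_right_inj _ |>.mpr ih)

theorem occurs_append_length {α : Type*} {x v y : List α} (h : x <+: y) :
    Occurs x (v ++ y) v.length := by
  rwa [Occurs, List.drop_left]

theorem Occurs.length_le_sub {α : Type*} {x w : List α} {i : ℕ} (h : Occurs x w i) :
    x.length ≤ w.length - i := by
  simpa using h.length_le

theorem finite_setOf_occurs {α : Type*} {x : List α} (hx : x ≠ []) (w : List α) :
    {i | Occurs x w i}.Finite :=
  (Set.finite_Iio w.length).subset fun i (hi : Occurs x w i) => by
    have := hi.length_le_sub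
    have := List.length_pos_iff.mpr hx
    simp only [Set.mem_Iio]
    omega

theorem not_twoDisjointOccs_of_length_lt {α : Type*} {x w : List α}
    (h : w.length < x.length + x.length) : ¬ TwoDisjointOccs x w := by
  rintro ⟨i, j, -, hj, hij⟩
  have := hj.length_le_sub
  omega

theorem HasPeriod.occurs_flatten_replicate_take_append {α : Type*} {x : List α} {p : ℕ}
    (h : HasPeriod x p) (hpx : p ≤ x.length) {m j : ℕ} (hmj : m ≤ j) :
    Occurs x ((List.replicate j (x.take p)).flatten ++ x) (m * p) := by
  obtain ⟨k, rfl⟩ := Nat.exists_eq_add_of_le hmj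
  rw [List.replicate_add, List.flatten_append, List.append_assoc]
  convert occurs_append_length (h.prefix_flatten_replicate_take_append k) using 1
  simp [hpx]

theorem HasPeriod.succ_le_ncard_occurs {α : Type*} {x : List α} {p : ℕ} (h : HasPeriod x p)
    (hpx : p ≤ x.length) (j : ℕ) :
    j + 1 ≤ {i | Occurs x ((List.replicate j (x.take p)).flatten ++ x) i}.ncard := by
  rw [← Set.ncard_Iic_nat j]
  exact Set.ncard_le_ncard_of_injOn (· * p)
    (fun _ hm => h.occurs_flatten_replicate_take_append hpx hm)
    (fun _ _ _ _ hab => Nat.eq_of_mul_eq_mul_right h.1 hab)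
    (finite_setOf_occurs (List.ne_nil_of_length_pos (h.1.trans hpx)) _)

theorem occurrences_bound_achievable {α : Type*} (x : List α) (h1 : 1 ≤ x.length) :
    ∃ w : List α,
      (x.length + minPeriod x - 1) / minPeriod x ≤ {i : ℕ | Occurs x w i}.ncard ∧
      ¬ TwoDisjointOccs x w := by
  set n := x.length
  set p := minPeriod x
  have hper : HasPeriod x p := hasPeriod_minPeriod h1
  have hpn : p ≤ n := minPeriod_le_length h1
  set j := (n - 1) / p
  have hceil : (n + p - 1) / p = j + 1 := by
    rw [show n + p - 1 = n - 1 + p by omega, Nat.add_div_right _ hper.1]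
  have hjp : j * p < n := (Nat.div_mul_le_self (n - 1) p).trans_lt (by omega)
  refine ⟨(List.replicate j (x.take p)).flatten ++ x, hceil ▸ hper.succ_le_ncard_occurs hpn j,
    not_twoDisjointOccs_of_length_lt ?_⟩
  simpa [n, hpn] using hjp
end

section
/- For every integer k ≥ 1, the maximum length of a word over a k-letter alphabet containing no two disjoint occurrences of a same length-2 factor is k^2 + k + 1; that is, there exists a word of length k^2 + k + 1 over a k-letter alphabet with no two disjoint occurrences of any length-2 word, and every word of length at least k^2 + k + 2 over a k-letter alphabet contains two disjoint occurrences of some length-2 word. -/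
/-! Index the length-2 factors of a word `w` by their positions `0, …, |w| - 2`. If no factor has
two disjoint occurrences, equal factors sit at adjacent positions, and a factor at positions `i`
and `i + 1` is `a a`. So each of the `k ^ 2` factors occurs at most once, except the `k` factors
`a a`, which occur at most twice, giving `|w| - 1 ≤ k ^ 2 + k`. The word of `extremalLetter`
shows that this is sharp. -/

namespace Finset

theorem card_le_two_of_forall_lt_add_two {s : Finset ℕ} (h : ∀ i ∈ s, ∀ j ∈ s, j < i + 2) :
    #s ≤ 2 := by
  by_contra! hs
  obtain ⟨a, ha, b, hb, c, hc, hab, hac, hbc⟩ := two_lt_card.mp hs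
  have := h a ha b hb; have := h b hb a ha; have := h a ha c hc
  have := h c hc a ha; have := h b hb c hc; have := h c hc b hb
  omega

theorem exists_add_one_mem_of_forall_lt_add_two {s : Finset ℕ}
    (h : ∀ i ∈ s, ∀ j ∈ s, j < i + 2) (hs : 1 < #s) : ∃ i ∈ s, i + 1 ∈ s := by
  obtain ⟨a, ha, b, hb, hab⟩ := one_lt_card.mp hs
  rcases Nat.lt_or_gt_of_ne hab with hlt | hlt
  · exact ⟨a, ha, by rwa [show a + 1 = b by have := h a ha b hb; omega]⟩
  · exact ⟨b, hb, by rwa [show b + 1 = a by have := h b hb a ha; omega]⟩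

end Finset

open Finset in
theorem List.length_le_card_add_card_of_repeats_adjacent {β : Type*} [Fintype β] (l : List β)
    (D : Finset β) (hfar : ∀ i j b, i + 2 ≤ j → l[i]? = some b → l[j]? ≠ some b)
    (hnear : ∀ i b, l[i]? = some b → l[i + 1]? = some b → b ∈ D) :
    l.length ≤ Fintype.card β + #D := by
  classical
  set fiber : β → Finset ℕ := fun b => {i ∈ Finset.range l.length | l[i]? = some b}
  have hclose (b : β) : ∀ i ∈ fiber b, ∀ j ∈ fiber b, j < i + 2 := by
    intro i hi j hj
    simp only [fiber, Finset.mem_filter] at hi hj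
    by_contra! hij
    exact hfar i j b hij hi.2 hj.2
  have hfiber (b : β) : #(fiber b) ≤ 1 + if b ∈ D then 1 else 0 := by
    split_ifs with hb
    · exact Finset.card_le_two_of_forall_lt_add_two (hclose b)
    · by_contra! hcard
      obtain ⟨i, hi, hi'⟩ := Finset.exists_add_one_mem_of_forall_lt_add_two (hclose b) (by omega)
      simp only [fiber, Finset.mem_filter] at hi hi'
      exact hb (hnear i b hi.2 hi'.2)
  calc l.length = #(Finset.range l.length) := (Finset.card_range _).symm
    _ = ∑ b ∈ univ.map .some, #{i ∈ Finset.range l.length | l[i]? = b} :=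
        Finset.card_eq_sum_card_fiberwise fun i hi => by simp_all
    _ = ∑ b, #(fiber b) := Finset.sum_map _ _ _
    _ ≤ ∑ b : β, (1 + if b ∈ D then 1 else 0) := Finset.sum_le_sum fun b _ => hfiber b
    _ = Fintype.card β + #D := by simp [Finset.sum_add_distrib]

section Words

variable {α : Type*}

theorem occurs_pair_iff {w : List α} {a b : α} {i : ℕ} :
    Occurs [a, b] w i ↔ w[i]? = some a ∧ w[i + 1]? = some b := by
  constructor
  · rintro ⟨t, ht⟩
    have h0 : (w.drop i)[0]? = some a := by rw [← ht]; simp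
    have h1 : (w.drop i)[1]? = some b := by rw [← ht]; simp
    rw [List.getElem?_drop] at h0 h1
    exact ⟨h0, h1⟩
  · rintro ⟨h0, h1⟩
    obtain ⟨hi, rfl⟩ := List.getElem?_eq_some_iff.mp h0
    obtain ⟨hi', rfl⟩ := List.getElem?_eq_some_iff.mp h1
    exact ⟨w.drop (i + 2), by rw [List.drop_eq_getElem_cons hi, List.drop_eq_getElem_cons hi']; rfl⟩

theorem occurs_pair_iff_getElem?_zip_tail {w : List α} {a b : α} {i : ℕ} :
    Occurs [a, b] w i ↔ (w.zip w.tail)[i]? = some (a, b) := by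
  simp [occurs_pair_iff, List.getElem?_zip_eq_some, List.getElem?_tail]

theorem length_le_of_forall_not_twoDisjointOccs [Fintype α] {w : List α}
    (h : ∀ x : List α, x.length = 2 → ¬ TwoDisjointOccs x w) :
    w.length ≤ Fintype.card α ^ 2 + Fintype.card α + 1 := by
  classical
  have hpairs := (w.zip w.tail).length_le_card_add_card_of_repeats_adjacent Finset.univ.diag
    (fun i j ⟨a, b⟩ hij hi hj => h [a, b] rfl ⟨i, j, occurs_pair_iff_getElem?_zip_tail.mpr hi,
      occurs_pair_iff_getElem?_zip_tail.mpr hj, hij⟩)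
    (fun i ⟨a, b⟩ hi hi' => by
      rw [← occurs_pair_iff_getElem?_zip_tail, occurs_pair_iff] at hi hi'
      simpa using Option.some.inj (hi'.1.symm.trans hi.2))
  simp only [List.length_zip, List.length_tail, Fintype.card_prod, Finset.diag_card,
    Finset.card_univ] at hpairs
  rw [sq]
  omega

end Words

/-- Letter `i` of a word over `{0, …, k - 1}` of length `k ^ 2 + k + 1`. Over `k + 2` letters it
is the block `0 n n n k n (k-1) n … 1 n`, where `n = k + 1`, followed by the word over `k + 1`
letters. The block and the `0` after it contain every length-2 word involving `n` once, except
`n n`, which occurs twice but overlapping. -/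
def extremalLetter : ℕ → ℕ → ℕ
  | 0, _ | 1, _ => 0
  | k + 2, i =>
      if i = 0 then 0
      else if i < 2 * k + 4 then (if i % 2 = 1 then k + 1 else k + 2 - i / 2)
      else extremalLetter (k + 1) (i - (2 * k + 4))

theorem extremalLetter_le (k i : ℕ) : extremalLetter (k + 1) i ≤ k := by
  induction k generalizing i with
  | zero => simp [extremalLetter]
  | succ k ih =>
    rw [extremalLetter]
    split_ifs <;> first | omega | exact (ih _).trans (Nat.le_succ k)

@[simp]
theorem extremalLetter_zero (k : ℕ) : extremalLetter k 0 = 0 := by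
  rcases k with _ | _ | k <;> simp [extremalLetter]

theorem extremalLetter_add_two_of_le {k i : ℕ} (h : i ≤ 2 * k + 4) :
    extremalLetter (k + 2) i =
      if i = 0 then 0 else if i % 2 = 1 then k + 1 else k + 2 - i / 2 := by
  rcases h.lt_or_eq with h | rfl
  · simp [extremalLetter, h]
  · simp [extremalLetter]
    omega

theorem extremalLetter_add_two_of_ge {k i : ℕ} (h : 2 * k + 4 ≤ i) :
    extremalLetter (k + 2) i = extremalLetter (k + 1) (i - (2 * k + 4)) := by
  rcases h.eq_or_lt with rfl | h
  · simp [extremalLetter]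
  · rw [extremalLetter, if_neg (by omega), if_neg (by omega)]

theorem extremalLetter_pair_ne :
    ∀ (k : ℕ) {i j : ℕ}, i + 2 ≤ j → j + 1 < (k + 1) ^ 2 + (k + 1) + 1 →
    extremalLetter (k + 1) i = extremalLetter (k + 1) j →
    extremalLetter (k + 1) (i + 1) ≠ extremalLetter (k + 1) (j + 1)
  | 0, _, _, _, hj, _ => by omega
  | k + 1, i, j, hij, hj, h0 => by
    have hsq : (k + 1 + 1) ^ 2 = (k + 1) ^ 2 + 2 * k + 3 := by ring
    rcases Nat.lt_or_ge j (2 * k + 4) with hj' | hj'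
    · rw [extremalLetter_add_two_of_le (by omega), extremalLetter_add_two_of_le (by omega)] at h0 ⊢
      split_ifs at h0 ⊢ <;> first | contradiction | omega
    rcases Nat.lt_or_ge i (2 * k + 4) with hi | hi
    · -- the pair at `i` contains the letter `k + 1`, which does not occur after the block
      have := extremalLetter_le k (j - (2 * k + 4))
      have := extremalLetter_le k (j + 1 - (2 * k + 4))
      rw [extremalLetter_add_two_of_le (by omega), extremalLetter_add_two_of_ge hj'] at h0
      rw [extremalLetter_add_two_of_le (by omega), extremalLetter_add_two_of_ge (by omega)]
      split_ifs at h0 ⊢ <;> first | contradiction | omega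
    · rw [extremalLetter_add_two_of_ge hi, extremalLetter_add_two_of_ge hj'] at h0
      rw [extremalLetter_add_two_of_ge (by omega), extremalLetter_add_two_of_ge (by omega),
        show i + 1 - (2 * k + 4) = i - (2 * k + 4) + 1 by omega,
        show j + 1 - (2 * k + 4) = j - (2 * k + 4) + 1 by omega]
      exact extremalLetter_pair_ne k (by omega) (by omega) h0

theorem exists_length_eq_forall_not_twoDisjointOccs (k : ℕ) :
    ∃ w : List (Fin (k + 1)), w.length = (k + 1) ^ 2 + (k + 1) + 1 ∧
      ∀ x : List (Fin (k + 1)), x.length = 2 → ¬ TwoDisjointOccs x w := by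
  refine ⟨List.ofFn fun i : Fin ((k + 1) ^ 2 + (k + 1) + 1) =>
    ⟨extremalLetter (k + 1) i, Nat.lt_succ_of_le (extremalLetter_le k i)⟩, List.length_ofFn, ?_⟩
  intro x hx ⟨i, j, hi, hj, hij⟩
  obtain ⟨a, b, rfl⟩ := List.length_eq_two.mp hx
  rw [occurs_pair_iff] at hi hj
  simp only [List.getElem?_ofFn, Option.dite_none_right_eq_some, Option.some.injEq] at hi hj
  obtain ⟨⟨_, rfl⟩, ⟨_, rfl⟩⟩ := hi
  obtain ⟨⟨_, hja⟩, ⟨hj', hjb⟩⟩ := hj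
  exact extremalLetter_pair_ne k (by simpa using hij) hj' (congrArg Fin.val hja).symm
    (congrArg Fin.val hjb).symm

theorem C_k_two (k : ℕ) (hk : 1 ≤ k) :
    (∃ w : List (Fin k), w.length = k ^ 2 + k + 1 ∧
      ∀ x : List (Fin k), x.length = 2 → ¬ TwoDisjointOccs x w) ∧
    (∀ w : List (Fin k), k ^ 2 + k + 2 ≤ w.length →
      ∃ x : List (Fin k), x.length = 2 ∧ TwoDisjointOccs x w) := by
  refine ⟨?_, fun w hw => ?_⟩
  · obtain ⟨m, rfl⟩ := Nat.exists_eq_add_of_le' hk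
    exact exists_length_eq_forall_not_twoDisjointOccs m
  · by_contra! h
    have := length_le_of_forall_not_twoDisjointOccs h
    rw [Fintype.card_fin] at this
    omega
end

section
/- For every integer k ≥ 2, there exists a de Bruijn word of order 3 over a k-letter alphabet Σ_k (i.e., a word of length k^3 + 2 containing every word of length 3 over Σ_k exactly once as a factor) that, for every pair of distinct letters a, b ∈ Σ_k, contains either abab or baba as a factor. -/
/-!
The word is built one letter at a time. A word over `{0, …, c - 1}` containing every triple and
ending in `0 0` is extended to one over `{0, …, c}` by gluing on, along a common `0 0`, a word that
begins and ends with `0 0` and contains every triple involving `c`. That word is a concatenation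
of runs, run `p` (`p < c`) listing the blocks `x p c` for all `x ≤ c` and starting with `x = 0`. So `x p c` lies in a block, while `p c y` and `c y p` straddle
two consecutive blocks of run `p` when `y ≠ 0`, and the end of some run and the start of the next
when `y = 0`. A single extra `c` supplies `c c c`. The length is then `(c + 1)³ + 2`, so by
pigeonhole each triple occurs only once.
-/

namespace List

variable {α β : Type*}

theorem exists_pair_infix_of_mem_tail {y : α} : ∀ {l : List α}, y ∈ l.tail → ∃ x, [x, y] <:+: l
  | [], h | [_], h => absurd h (not_mem_nil)
  | a :: b :: l, h => by
    rcases mem_cons.1 h with rfl | h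
    · exact ⟨a, [], l, rfl⟩
    · obtain ⟨x, hx⟩ := exists_pair_infix_of_mem_tail (l := b :: l) h
      exact ⟨x, hx.trans (suffix_cons a _).isInfix⟩

theorem append_infix_flatMap {x y : α} {l : List α} (h : [x, y] <:+: l) (f : α → List β) :
    f x ++ f y <:+: l.flatMap f := by
  obtain ⟨s, t, rfl⟩ := h
  exact ⟨s.flatMap f, t.flatMap f, by simp⟩

theorem suffix_flatMap_getLast {l : List α} (hl : l ≠ []) (f : α → List β) :
    f (l.getLast hl) <:+ l.flatMap f := by
  refine ⟨l.dropLast.flatMap f, ?_⟩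
  conv_rhs => rw [← dropLast_append_getLast hl]
  simp

theorem suffix_append_drop {s w u : List α} (hw : s <:+ w) (hu : s <+: u) :
    u <:+ w ++ u.drop s.length := by
  obtain ⟨v, rfl⟩ := hw
  obtain ⟨t, rfl⟩ := hu
  exact ⟨v, by simp⟩

theorem pair_infix_range {n m : ℕ} (h : n + 1 < m) : [n, n + 1] <:+: range m := by
  obtain ⟨k, rfl⟩ : ∃ k, m = n + 2 + k := ⟨m - (n + 2), by omega⟩
  exact ⟨range n, (range k).map (n + 2 + ·), by simp [range_add, range_succ]⟩

end List

theorem occurs_iff_take_drop_eq {α : Type*} {x w : List α} {i : ℕ} :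
    Occurs x w i ↔ (w.drop i).take x.length = x := by
  rw [Occurs, List.prefix_iff_eq_take, eq_comm]

theorem existsUnique_occurs_of_forall_infix {α : Type*} [Fintype α] {w : List α} {n : ℕ}
    (hn : 0 < n) (hlen : w.length + 1 = Fintype.card α ^ n + n)
    (hw : ∀ x : List α, x.length = n → x <:+: w) (x : List α) (hx : x.length = n) :
    ∃! i, Occurs x w i := by
  have bound : ∀ {y : List α} {i}, y.length = n → Occurs y w i → i < Fintype.card α ^ n := by
    intro y i hy h
    have := h.length_le
    simp only [List.length_drop] at this
    omega
  let factor : Fin (Fintype.card α ^ n) → List.Vector α n := fun i =>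
    ⟨(w.drop i).take n, by simp only [List.length_take, List.length_drop]; omega⟩
  have exists_occurs : ∀ y : List α, y.length = n → ∃ i, Occurs y w i := by
    intro y hy
    obtain ⟨s, t, hst⟩ := hw y hy
    exact ⟨s.length, t, by simp [← hst]⟩
  have factor_eq : ∀ {y : List α} (hy : y.length = n) {i} (h : Occurs y w i),
      factor ⟨i, bound hy h⟩ = ⟨y, hy⟩ := by
    intro y hy i h
    exact Subtype.ext (by simp only [factor]; rw [← hy]; exact occurs_iff_take_drop_eq.1 h)
  have surj : Function.Surjective factor := fun ⟨y, hy⟩ =>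
    let ⟨_, h⟩ := exists_occurs y hy
    ⟨_, factor_eq hy h⟩
  have inj : Function.Injective factor :=
    ((Fintype.bijective_iff_surjective_and_card _).2 ⟨surj, by simp⟩).1
  obtain ⟨i, hi⟩ := exists_occurs x hx
  exact ⟨i, hi, fun j hj => congrArg Fin.val (inj ((factor_eq hx hj).trans (factor_eq hx hi).symm))⟩

namespace DeBruijn3

def runOrder (c p : ℕ) : List ℕ := 0 :: c :: (List.range' p (c - p) ++ List.range' 1 (p - 1))

/- In run `p ≠ 0` the block `c p c` is followed by `p p c`, which produces `c p c p`. Run `0`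
ends with `c 0 c`, which the next run turns into `c 0 c 0`; the extra `c` before it gives
`c c c`. -/
def run (c p : ℕ) : List ℕ :=
  if p = 0 then (0 :: List.range' 1 (c - 1)).flatMap (fun x => [x, 0, c]) ++ [c, c, 0, c]
  else (runOrder c p).flatMap fun x => [x, p, c]

def extension (c : ℕ) : List ℕ := (List.range c).flatMap (run c) ++ [0, 0]

def word : ℕ → List ℕ
  | 0 => [0, 0, 0]
  | n + 1 => word n ++ (extension (n + 1)).drop 2

variable {c p x y : ℕ}

theorem mem_tail_runOrder (hy0 : y ≠ 0) (hy : y ≤ c) : y ∈ (runOrder c p).tail := by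
  simp only [runOrder, List.tail_cons, List.mem_cons, List.mem_append, List.mem_range'_1]
  omega

theorem pair_infix_runOrder (hp : p < c) : [c, p] <:+: runOrder c p := by
  obtain ⟨m, hm⟩ : ∃ m, c - p = m + 1 := ⟨c - p - 1, by omega⟩
  exact ⟨[0], List.range' (p + 1) m ++ List.range' 1 (p - 1),
    by simp [runOrder, hm, List.range'_succ]⟩

theorem suffix_flatMap_block {l : List ℕ} (hl : l ≠ []) :
    [p, c] <:+ l.flatMap fun x => [x, p, c] :=
  List.IsSuffix.trans ⟨[_], rfl⟩ (List.suffix_flatMap_getLast hl fun x => [x, p, c])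

theorem prefix_run : [0, p] <+: run c p := by
  unfold run
  split_ifs with h <;> simp [h, runOrder]

theorem suffix_zero_run : [c, c, 0, c] <:+ run c 0 :=
  List.suffix_append _ _

theorem suffix_run : [p, c] <:+ run c p := by
  unfold run
  split_ifs with h
  · subst h
    exact List.IsSuffix.trans ⟨[c, c], rfl⟩ suffix_zero_run
  · exact suffix_flatMap_block (List.cons_ne_nil _ _)

theorem corner_infix_zero_run : [0, c, c, c, 0, c] <:+: run c 0 := by
  obtain ⟨t, ht⟩ :=
    suffix_flatMap_block (p := 0) (c := c) (List.cons_ne_nil 0 (List.range' 1 (c - 1)))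
  exact ⟨t, [], by simp [run, ← ht]⟩

theorem block_infix_run (hp : p < c) (hx : x ≤ c) : [x, p, c] <:+: run c p := by
  unfold run
  split_ifs with h
  · subst h
    rcases hx.lt_or_eq with hx | hx
    · refine (List.infix_flatMap_of_mem ?_ fun x => [x, 0, c]).trans List.infix_append_left
      simp only [List.mem_cons, List.mem_range'_1]
      omega
    · rw [hx]
      exact (List.IsSuffix.trans ⟨[c], rfl⟩ suffix_zero_run).isInfix
  · refine List.infix_flatMap_of_mem ?_ fun x => [x, p, c]
    simp only [runOrder, List.mem_cons, List.mem_append, List.mem_range'_1]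
    omega

theorem boundary_infix_run (hp : p < c) (hy0 : y ≠ 0) (hy : y ≤ c) :
    [p, c, y] <:+: run c p ∧ [c, y, p] <:+: run c p := by
  by_cases hcorner : p = 0 ∧ y = c
  · obtain ⟨rfl, rfl⟩ : p = 0 ∧ c = y := ⟨hcorner.1, hcorner.2.symm⟩
    exact ⟨List.IsInfix.trans ⟨[], [c, 0, c], rfl⟩ corner_infix_zero_run,
      List.IsInfix.trans ⟨[0, c], [c], rfl⟩ corner_infix_zero_run⟩
  have blocks : ∀ l : List ℕ, y ∈ l.tail →
      ∃ x, [x, p, c, y, p, c] <:+: l.flatMap fun x => [x, p, c] := fun l h =>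
    let ⟨x, hx⟩ := List.exists_pair_infix_of_mem_tail h
    ⟨x, List.append_infix_flatMap hx fun x => [x, p, c]⟩
  suffices ∃ x, [x, p, c, y, p, c] <:+: run c p by
    obtain ⟨x, hx⟩ := this
    exact ⟨List.IsInfix.trans ⟨[x], [p, c], rfl⟩ hx, List.IsInfix.trans ⟨[x, p], [c], rfl⟩ hx⟩
  unfold run
  split_ifs with h
  · subst h
    obtain ⟨x, hx⟩ := blocks (0 :: List.range' 1 (c - 1)) (by
      simp only [List.tail_cons, List.mem_range'_1]
      omega)
    exact ⟨x, hx.trans List.infix_append_left⟩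
  · exact blocks _ (mem_tail_runOrder hy0 hy)

theorem abab_infix_run (hp0 : p ≠ 0) (hp : p < c) : [c, p, c, p] <:+: run c p := by
  rw [run, if_neg hp0]
  exact List.IsInfix.trans ⟨[], [p, c], rfl⟩
    (List.append_infix_flatMap (pair_infix_runOrder hp) fun x => [x, p, c])

/- The final `0 0` of `extension c` stands in for the start `0 0 c` of run `0`, so the runs are
followed by the beginning `0 q` of run `q` cyclically. -/
theorem run_append_infix_extension (hp : p < c) :
    run c p ++ [0, (p + 1) % c] <:+: extension c := by
  by_cases h : p + 1 < c
  · rw [Nat.mod_eq_of_lt h]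
    exact ((List.prefix_append_right_inj (run c p)).2 prefix_run).isInfix.trans
      ((List.append_infix_flatMap (List.pair_infix_range h) (run c)).trans List.infix_append_left)
  · obtain rfl : c = p + 1 := by omega
    rw [Nat.mod_self]
    exact ⟨(List.range p).flatMap (run (p + 1)), [], by simp [extension, List.range_succ]⟩

theorem suffix_append_infix_extension {s : List ℕ} (hs : s <:+ run c p) (hp : p < c) :
    s ++ [0, (p + 1) % c] <:+: extension c := by
  obtain ⟨t, ht⟩ := hs
  exact List.IsInfix.trans ⟨t, [], by simp [← ht]⟩ (run_append_infix_extension hp)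

theorem run_infix_extension (hp : p < c) : run c p <:+: extension c :=
  List.infix_append_left.trans (run_append_infix_extension hp)

theorem infix_extension_of_last (hp : p < c) (hx : x ≤ c) : [x, p, c] <:+: extension c :=
  (block_infix_run hp hx).trans (run_infix_extension hp)

theorem infix_extension_of_mid (hp : p < c) (hy : y ≤ c) : [p, c, y] <:+: extension c := by
  rcases eq_or_ne y 0 with rfl | hy0
  · exact List.IsInfix.trans ⟨[], [(p + 1) % c], rfl⟩
      (suffix_append_infix_extension suffix_run hp)
  · exact (boundary_infix_run hp hy0 hy).1.trans (run_infix_extension hp)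

theorem infix_extension_of_head (hp : p < c) (hy : y ≤ c) : [c, y, p] <:+: extension c := by
  rcases eq_or_ne y 0 with rfl | hy0
  · obtain ⟨q, hq, hqp⟩ : ∃ q < c, (q + 1) % c = p := by
      rcases eq_or_ne p 0 with rfl | hp0
      · exact ⟨c - 1, by omega, by rw [Nat.sub_add_cancel hp, Nat.mod_self]⟩
      · exact ⟨p - 1, by omega, by rw [Nat.sub_add_cancel (by omega), Nat.mod_eq_of_lt hp]⟩
    have h := suffix_append_infix_extension (suffix_run (c := c) (p := q)) hq
    rw [hqp] at h
    exact List.IsInfix.trans ⟨[q], [], rfl⟩ h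
  · exact (boundary_infix_run hp hy0 hy).2.trans (run_infix_extension hp)

theorem infix_extension {a b d : ℕ} (hc : 0 < c) (ha : a ≤ c) (hb : b ≤ c) (hd : d ≤ c)
    (h : a = c ∨ b = c ∨ d = c) : [a, b, d] <:+: extension c := by
  rcases Nat.lt_or_ge d c with hd | hd
  · rcases Nat.lt_or_ge b c with hb | hb
    · obtain rfl : c = a := by omega
      exact infix_extension_of_head hd hb.le
    · obtain rfl : c = b := by omega
      rcases Nat.lt_or_ge a c with ha | ha
      · exact infix_extension_of_mid ha hd.le
      · obtain rfl : c = a := by omega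
        exact infix_extension_of_head hd le_rfl
  · obtain rfl : c = d := by omega
    rcases Nat.lt_or_ge b c with hb | hb
    · exact infix_extension_of_last hb ha
    · obtain rfl : c = b := by omega
      rcases Nat.lt_or_ge a c with ha | ha
      · exact infix_extension_of_mid ha le_rfl
      · obtain rfl : c = a := by omega
        exact List.IsInfix.trans ⟨[0], [0, c], rfl⟩
          (corner_infix_zero_run.trans (run_infix_extension hc))

theorem abab_infix_extension {a : ℕ} (ha : a < c) : [c, a, c, a] <:+: extension c := by
  rcases eq_or_ne a 0 with rfl | ha0
  · exact List.IsInfix.trans ⟨[], [(0 + 1) % c], rfl⟩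
      (suffix_append_infix_extension (List.IsSuffix.trans ⟨[c], rfl⟩ suffix_zero_run) ha)
  · exact (abab_infix_run ha0 ha).trans (run_infix_extension ha)

theorem length_run (hc : 0 < c) (hp : p < c) :
    (run c p).length = 3 * c + 3 + if p = 0 then 1 else 0 := by
  unfold run
  split_ifs <;> simp [runOrder] <;> omega

theorem length_extension (hc : 0 < c) : (extension c).length = 3 * c ^ 2 + 3 * c + 3 := by
  obtain ⟨m, rfl⟩ : ∃ m, c = m + 1 := ⟨c - 1, by omega⟩
  have hsucc : ∀ p ∈ List.range m, (run (m + 1) (p + 1)).length = 3 * m + 6 := fun p hp => by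
    rw [length_run hc (by simp at hp; omega), if_neg p.succ_ne_zero]
    ring
  simp only [extension, List.length_append, List.length_flatMap, List.range_succ_eq_map,
    List.map_cons, List.map_map, List.sum_cons]
  rw [List.map_congr_left (by simpa using hsucc), List.map_const', List.sum_replicate_nat,
    length_run hc hc, if_pos rfl]
  simp
  ring

theorem two_zeros_prefix_extension (hc : 0 < c) : [0, 0] <+: extension c := by
  obtain ⟨m, rfl⟩ : ∃ m, c = m + 1 := ⟨c - 1, by omega⟩
  rw [extension, List.range_succ_eq_map, List.flatMap_cons, List.append_assoc]
  exact prefix_run.trans (List.prefix_append _ _)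

theorem two_zeros_suffix_word : ∀ n, [0, 0] <:+ word n
  | 0 => ⟨[0], rfl⟩
  | n + 1 => (List.suffix_append _ [0, 0]).trans
      (List.suffix_append_drop (two_zeros_suffix_word n) (two_zeros_prefix_extension n.succ_pos))

theorem extension_suffix_word (n : ℕ) : extension (n + 1) <:+ word (n + 1) :=
  List.suffix_append_drop (two_zeros_suffix_word n) (two_zeros_prefix_extension n.succ_pos)

theorem word_prefix_of_le {m n : ℕ} (h : m ≤ n) : word m <+: word n := by
  induction n, h using Nat.le_induction with
  | base => exact List.prefix_refl _
  | succ n _ ih => exact ih.trans (List.prefix_append _ _)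

theorem length_word : ∀ n, (word n).length = (n + 1) ^ 3 + 2
  | 0 => rfl
  | n + 1 => by
    rw [word, List.length_append, List.length_drop, length_word n, length_extension n.succ_pos]
    have : 2 ≤ 3 * (n + 1) ^ 2 + 3 * (n + 1) + 3 := by omega
    zify [this]
    ring

theorem infix_word {n a b d : ℕ} (ha : a ≤ n) (hb : b ≤ n) (hd : d ≤ n) :
    [a, b, d] <:+: word n := by
  rcases Nat.eq_zero_or_pos (max a (max b d)) with h0 | hpos
  · obtain ⟨rfl, rfl, rfl⟩ : a = 0 ∧ b = 0 ∧ d = 0 := by omega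
    exact (word_prefix_of_le (Nat.zero_le n)).isInfix
  · obtain ⟨m, hm⟩ : ∃ m, max a (max b d) = m + 1 := ⟨_, (Nat.succ_pred_eq_of_pos hpos).symm⟩
    have hmax := hm ▸ max_choice a (max b d)
    exact (infix_extension m.succ_pos (by omega) (by omega) (by omega) (by omega)).trans
      ((extension_suffix_word m).isInfix.trans (word_prefix_of_le (by omega)).isInfix)

theorem abab_infix_word {n a b : ℕ} (hab : a < b) (hb : b ≤ n) : [b, a, b, a] <:+: word n := by
  obtain ⟨m, rfl⟩ : ∃ m, b = m + 1 := ⟨b - 1, by omega⟩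
  exact (abab_infix_extension hab).trans
    ((extension_suffix_word m).isInfix.trans (word_prefix_of_le hb).isInfix)

end DeBruijn3

theorem deBruijn_order3_with_abab (k : ℕ) (hk : 2 ≤ k) :
    ∃ w : List (Fin k), w.length = k ^ 3 + 2 ∧
      (∀ x : List (Fin k), x.length = 3 → ∃! i : ℕ, Occurs x w i) ∧
      (∀ a b : Fin k, a ≠ b → ([a, b, a, b] <:+: w ∨ [b, a, b, a] <:+: w)) := by
  obtain ⟨n, rfl⟩ : ∃ n, k = n + 1 := ⟨k - 1, by omega⟩
  let w : List (Fin (n + 1)) := (DeBruijn3.word n).map (Fin.ofNat (n + 1))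
  have lift : ∀ l : List (Fin (n + 1)), l.map Fin.val <:+: DeBruijn3.word n → l <:+: w :=
    fun l h => by simpa [w, Function.comp_def] using h.map (Fin.ofNat (n + 1))
  have hlen : w.length = (n + 1) ^ 3 + 2 := by simp [w, DeBruijn3.length_word]
  have hcov : ∀ x : List (Fin (n + 1)), x.length = 3 → x <:+: w := by
    intro x hx
    obtain ⟨a, b, d, rfl⟩ := List.length_eq_three.1 hx
    exact lift _ (DeBruijn3.infix_word (Fin.is_le a) (Fin.is_le b) (Fin.is_le d))
  refine ⟨w, hlen, existsUnique_occurs_of_forall_infix three_pos (by simp [hlen]) hcov,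
    fun a b hab => ?_⟩
  rcases lt_or_gt_of_ne (Fin.val_ne_of_ne hab) with h | h
  · exact Or.inr (lift _ (DeBruijn3.abab_infix_word h (Fin.is_le b)))
  · exact Or.inl (lift _ (DeBruijn3.abab_infix_word h (Fin.is_le a)))
end

section
/- Let k ≥ 1, t ≥ 1, M ≥ t and N be integers such that (i) every word over a k-letter alphabet of length strictly greater than M contains two disjoint occurrences of some word of length t, and (ii) every word over the same alphabet of length strictly greater than N contains two disjoint occurrences of some word of length M + 1. Then every word over that alphabet of length strictly greater than N contains a split occurrence of a t-overlap. (In the paper's notation, S(k,t) ≤ C(k, C(k,t) + 1).) -/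
/-!
Take two disjoint occurrences of a word `x` of length `M + 1` in `w`, and two disjoint
occurrences of a word `u` of length `t` in `x`, say `x = a u b u c`. Then `v = u b` occurs in
the first copy of `x` and `v u` in the second, and `v · v u` is a `t`-overlap since `u` is the
length-`t` prefix of `v`.
-/

section

variable {α : Type*}

theorem TwoDisjointOccs.exists_eq_append {x w : List α} (h : TwoDisjointOccs x w) :
    ∃ a b c, w = a ++ x ++ b ++ x ++ c := by
  obtain ⟨i, j, ⟨s, hs⟩, ⟨c, hc⟩, hij⟩ := h
  obtain ⟨m, rfl⟩ : ∃ m, j = i + (x.length + m) := ⟨j - i - x.length, by omega⟩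
  have hsm : s.drop m = x ++ c := by
    rw [hc, ← List.drop_drop, ← hs]
    simp
  refine ⟨w.take i, s.take m, c, ?_⟩
  calc w = w.take i ++ x ++ (s.take m ++ s.drop m) := by
        rw [List.take_append_drop, List.append_assoc, hs, List.take_append_drop]
    _ = w.take i ++ x ++ s.take m ++ x ++ c := by simp [hsm]

theorem isTOverlap_append_append_self {u : List α} (hu : u ≠ []) (b : List α) :
    IsTOverlap u.length (u ++ b ++ (u ++ b) ++ u) :=
  ⟨u ++ b, by simp [hu], by simp, by simp⟩

theorem TwoDisjointOccs.hasSplitTOverlap {u x w : List α} (hu : u ≠ [])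
    (hux : TwoDisjointOccs u x) (hxw : TwoDisjointOccs x w) : HasSplitTOverlap u.length w := by
  obtain ⟨a', b', c', rfl⟩ := hux.exists_eq_append
  obtain ⟨a, b, c, rfl⟩ := hxw.exists_eq_append
  refine ⟨u ++ b', u ++ c' ++ b ++ a', u ++ b' ++ u, ⟨a ++ a', c' ++ c, by simp⟩, ?_⟩
  simpa only [List.append_assoc] using isTOverlap_append_append_self hu b'

end

theorem split_overlap_bound_general (k t M N : ℕ) (ht : 1 ≤ t)
    (h1 : ∀ w : List (Fin k), M < w.length →
      ∃ x : List (Fin k), x.length = t ∧ TwoDisjointOccs x w)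
    (h2 : ∀ w : List (Fin k), N < w.length →
      ∃ x : List (Fin k), x.length = M + 1 ∧ TwoDisjointOccs x w) :
    ∀ w : List (Fin k), N < w.length → HasSplitTOverlap t w := by
  intro w hw
  obtain ⟨x, hx, hxw⟩ := h2 w hw
  obtain ⟨u, rfl, hux⟩ := h1 x (by omega)
  exact hux.hasSplitTOverlap (List.ne_nil_of_length_pos ht) hxw

theorem split_overlap_bound (k t M N : ℕ) (hk : 1 ≤ k) (ht : 1 ≤ t) (hM : t ≤ M)
    (h1 : ∀ w : List (Fin k), M < w.length →
      ∃ x : List (Fin k), x.length = t ∧ TwoDisjointOccs x w)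
    (h2 : ∀ w : List (Fin k), N < w.length →
      ∃ x : List (Fin k), x.length = M + 1 ∧ TwoDisjointOccs x w) :
    ∀ w : List (Fin k), N < w.length → HasSplitTOverlap t w :=
  split_overlap_bound_general k t M N ht h1 h2
end

section
/- For every integer k ≥ 2, every word over a k-letter alphabet of length at least k^{k+1} + k contains a reversed split occurrence of a 1-overlap; that is, R(k,1) ≤ k^{k+1} + k - 1. -/
/-!
Slide a window of length `k + 1` along `w`. There are at least `k ^ (k + 1)` windows, so either
every word of length `k + 1` occurs, in particular `a ^ (k + 1)` and with it the overlap `a a a`,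
or two windows at positions `p < q` coincide. If `q - p ≤ k`, the stretch from `p` to the end of
the second window has period `q - p`, so it begins with the overlap `v v b`, where `v` has length
`q - p` and `b` is its first letter. Otherwise the window `u` occurs twice disjointly; being longer
than the alphabet, it has a factor `a s a`, and taking `x = a s a` in the first copy and `z = a s`
in the second gives `z x = a s a s a`.
-/
namespace List

variable {α : Type*}

theorem exists_cons_append_singleton_infix_of_not_nodup :
    ∀ {l : List α}, ¬ l.Nodup → ∃ a l', a :: l' ++ [a] <:+: l
  | [], h => absurd nodup_nil h
  | b :: t, h => by
    rw [nodup_cons, Classical.not_and_iff_not_or_not, not_not] at h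
    rcases h with hb | ht
    · obtain ⟨s, r, rfl⟩ := mem_iff_append.1 hb
      exact ⟨b, s, ⟨[], r, by simp⟩⟩
    · obtain ⟨a, l', hl'⟩ := exists_cons_append_singleton_infix_of_not_nodup ht
      exact ⟨a, l', hl'.trans (suffix_cons b t).isInfix⟩

theorem append_append_take_one_prefix {v s : List α} (hv : v ≠ [])
    (h : (v ++ s).take (v.length + 1) = s.take (v.length + 1)) :
    v ++ v ++ v.take 1 <+: v ++ s := by
  have hs : s.take (v.length + 1) = v ++ s.take 1 := by
    rw [← h, take_append, take_of_length_le (by omega), Nat.add_sub_cancel_left]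
  have hs₁ : s.take 1 = v.take 1 := by
    have := congrArg (take 1) hs
    rwa [take_take, Nat.min_eq_left (by omega),
      take_append_of_le_length (length_pos_iff.2 hv)] at this
  rw [append_assoc, prefix_append_right_inj, ← hs₁, ← hs]
  exact take_prefix _ _

theorem exists_take_drop_eq_or_forall_infix [Fintype α] {w : List α} {m : ℕ}
    (hw : Fintype.card α ^ m + m ≤ w.length + 1) :
    (∃ p q, p < q ∧ q + m ≤ w.length ∧ (w.drop p).take m = (w.drop q).take m) ∨
      ∀ u : List α, u.length = m → u <:+: w := by
  let window : Fin (Fintype.card α ^ m) → Vector α m :=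
    fun i => ⟨(w.drop i).take m, by simp only [length_take, length_drop]; omega⟩
  by_cases hinj : Function.Injective window
  · refine .inr fun u hu => ?_
    obtain ⟨i, hi⟩ := ((Fintype.bijective_iff_injective_and_card window).2
      ⟨hinj, by simp [card_vector]⟩).2 ⟨u, hu⟩
    have hwindow : (w.drop i).take m = u := congrArg Subtype.val hi
    rw [← hwindow]
    exact (take_prefix _ _).isInfix.trans (drop_suffix _ _).isInfix
  · obtain ⟨i, j, hij, hne⟩ := Function.not_injective_iff.1 hinj
    have hval := congrArg Subtype.val hij
    rcases lt_or_gt_of_ne (Fin.val_ne_of_ne hne) with h | h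
    · exact .inl ⟨i, j, h, by omega, hval⟩
    · exact .inl ⟨j, i, h, by omega, hval.symm⟩

end List

namespace HasRevSplitTOverlap

variable {α : Type*}

theorem of_infix {t : ℕ} {u w : List α} (huw : u <:+: w) (hu : IsTOverlap t u) :
    HasRevSplitTOverlap t w :=
  ⟨[], [], u, by simpa using huw, by simpa using hu⟩

theorem of_not_nodup {u b w : List α} (h : u ++ b ++ u <:+: w) (hu : ¬ u.Nodup) :
    HasRevSplitTOverlap 1 w := by
  obtain ⟨a, l, p, s, rfl⟩ := List.exists_cons_append_singleton_infix_of_not_nodup hu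
  refine ⟨a :: l ++ [a], s ++ b ++ p, a :: l, ?_, a :: l, by simp, by simp, by simp⟩
  refine List.IsInfix.trans ⟨p, [a] ++ s, ?_⟩ h
  simp

theorem of_take_drop_eq [Fintype α] {w : List α} {m p q : ℕ}
    (hm : Fintype.card α < m) (hpq : p < q) (hq : q + m ≤ w.length)
    (heq : (w.drop p).take m = (w.drop q).take m) : HasRevSplitTOverlap 1 w := by
  set v := (w.drop p).take (q - p)
  have hv : v.length = q - p := by
    simp only [v, List.length_take, List.length_drop]
    omega
  have hsplit : w.drop p = v ++ w.drop q := by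
    rw [← List.take_append_drop (q - p) (w.drop p), List.drop_drop, Nat.add_sub_cancel' hpq.le]
  have hinfix : w.drop p <:+: w := (List.drop_suffix p w).isInfix
  by_cases hshort : q - p < m
  · have hperiod : (v ++ w.drop q).take (v.length + 1) = (w.drop q).take (v.length + 1) := by
      rw [← hsplit, ← Nat.min_eq_left (by omega : v.length + 1 ≤ m), ← List.take_take, heq,
        List.take_take]
    have hv₀ : v ≠ [] := by
      rw [← List.length_pos_iff, hv]
      omega
    have hprefix := List.append_append_take_one_prefix hv₀ hperiod
    rw [← hsplit] at hprefix
    exact of_infix (hprefix.isInfix.trans hinfix) ⟨v, hv₀, List.length_pos_iff.2 hv₀, rfl⟩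
  · set u := (w.drop p).take m
    obtain ⟨b, hb⟩ : u <+: v := List.take_prefix_take_left (by omega)
    obtain ⟨c, hc⟩ : u <+: w.drop q := heq ▸ List.take_prefix m _
    have hubu : u ++ b ++ u <:+: w :=
      List.IsInfix.trans ⟨[], c, by rw [hsplit, ← hb, ← hc]; simp⟩ hinfix
    have hu : ¬ u.Nodup := fun hnd => by
      have := hnd.length_le_card
      simp only [u, List.length_take, List.length_drop] at this
      omega
    exact of_not_nodup hubu hu

theorem one_of_card_pow_add_card_le [Fintype α] {w : List α} (hα : 2 ≤ Fintype.card α)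
    (hw : Fintype.card α ^ (Fintype.card α + 1) + Fintype.card α ≤ w.length) :
    HasRevSplitTOverlap 1 w := by
  obtain ⟨a⟩ : Nonempty α := Fintype.card_pos_iff.1 (by omega)
  rcases List.exists_take_drop_eq_or_forall_infix (w := w) (m := Fintype.card α + 1)
    (by omega) with ⟨p, q, hpq, hq, heq⟩ | hall
  · exact of_take_drop_eq (by omega) hpq hq heq
  · have haaa : List.replicate 3 a <+: List.replicate (Fintype.card α + 1) a :=
      List.prefix_replicate_iff.2 ⟨by simp only [List.length_replicate]; omega, by simp⟩
    exact of_infix (haaa.isInfix.trans (hall _ List.length_replicate))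
      ⟨[a], by simp, by simp, rfl⟩

end HasRevSplitTOverlap

theorem R_k_one_bound (k : ℕ) (hk : 2 ≤ k) :
    ∀ w : List (Fin k), k ^ (k + 1) + k ≤ w.length → HasRevSplitTOverlap 1 w := fun _ hw =>
  .one_of_card_pow_add_card_le (by simpa using hk) (by simpa using hw)
end
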